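/- Let U ⊆ ℝ⁴ be open and let u : U → ℝ be a smooth solution of the equation u₁₃ + u₂₄ + (x₁x₃+x₂x₄)(u₁₁u₂₂ − u₁₂²) = 0 on U. Let λ ∈ ℝ satisfy x₄ + λx₃ ≠ 0 for all x ∈ U, and define the vector fields X = ∂₄ + (x₁x₃+x₂x₄)(u₁₁∂₂ − u₁₂∂₁) + ((x₁−λx₂)/(x₄+λx₃))∂₁ and Y = ∂₃ + (x₁x₃+x₂x₄)(u₂₂∂₁ − u₁₂∂₂) − ((x₁−λx₂)/(x₄+λx₃))∂₂. Then for every x ∈ U, the vector [X,Y](x) lies in the linear span of X(x) and Y(x). -/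

import Mathlib

/-!
Both fields have the shape `∂₄ + A ∂₁ + B ∂₂` and `∂₃ + C ∂₁ + D ∂₂`, so `[X, Y]` only has
the components `X C - Y A` and `X D - Y B`. With `f = x₁x₃ + x₂x₄` and `E = heavenlyOp u` the
left-hand side of the equation, expanding these and using the symmetry of third derivatives
gives `X C - Y A = f ∂₂E` and `X D - Y B = -f ∂₁E`; all terms involving `(x₁ - λx₂)/(x₄ + λx₃)`
cancel identically. On a solution `E` vanishes on the open set `U`, hence so do its partial
derivatives, and `[X, Y] = 0`.
-/

open scoped ContDiff

noncomputable section

/-- `pd i u x` is the partial derivative `∂u/∂xᵢ` at `x`. -/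
def pd {n : ℕ} (i : Fin n) (u : (Fin n → ℝ) → ℝ) (x : Fin n → ℝ) : ℝ :=
  fderiv ℝ u x (Pi.single i 1)

/-- `pd2 i j u x` is the second partial derivative `∂²u/∂xᵢ∂xⱼ` at `x`. -/
def pd2 {n : ℕ} (i j : Fin n) (u : (Fin n → ℝ) → ℝ) (x : Fin n → ℝ) : ℝ :=
  pd i (pd j u) x

/-- Lie bracket of vector fields : `[X,Y](x) = DY(x)(X(x)) − DX(x)(Y(x))`. -/
def lieBr {n : ℕ} (X Y : (Fin n → ℝ) → (Fin n → ℝ)) (x : Fin n → ℝ) : Fin n → ℝ :=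
  fderiv ℝ Y x (X x) - fderiv ℝ X x (Y x)

open scoped Topology

section PartialDerivatives

variable {n : ℕ} {φ ψ : (Fin n → ℝ) → ℝ} {x : Fin n → ℝ}

theorem pd_congr_of_eventuallyEq (i : Fin n) (h : φ =ᶠ[𝓝 x] ψ) : pd i φ x = pd i ψ x := by
  rw [pd, pd, h.fderiv_eq]

theorem pd_const (i : Fin n) (c : ℝ) : pd i (fun _ => c) x = 0 := by
  simp [pd]

theorem pd_eq_zero_of_eqOn_zero {U : Set (Fin n → ℝ)} (hU : IsOpen U) (hφ : ∀ y ∈ U, φ y = 0)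
    (hx : x ∈ U) (i : Fin n) : pd i φ x = 0 := by
  rw [pd_congr_of_eventuallyEq i (Filter.eventuallyEq_of_mem (hU.mem_nhds hx) hφ), pd_const]

theorem pd_apply (i j : Fin n) : pd i (fun y => y j) x = (Pi.single i 1 : Fin n → ℝ) j := by
  rw [pd, fderiv_apply differentiableAt_id, fderiv_fun_id]
  rfl

theorem pd_neg (i : Fin n) : pd i (fun y => -φ y) x = -pd i φ x := by
  simp [pd]

theorem pd_add (i : Fin n) (hφ : DifferentiableAt ℝ φ x) (hψ : DifferentiableAt ℝ ψ x) :
    pd i (fun y => φ y + ψ y) x = pd i φ x + pd i ψ x := by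
  simp [pd, fderiv_fun_add hφ hψ]

theorem pd_sub (i : Fin n) (hφ : DifferentiableAt ℝ φ x) (hψ : DifferentiableAt ℝ ψ x) :
    pd i (fun y => φ y - ψ y) x = pd i φ x - pd i ψ x := by
  simp [pd, fderiv_fun_sub hφ hψ]

theorem pd_mul (i : Fin n) (hφ : DifferentiableAt ℝ φ x) (hψ : DifferentiableAt ℝ ψ x) :
    pd i (fun y => φ y * ψ y) x = pd i φ x * ψ x + φ x * pd i ψ x := by
  simp only [pd, fderiv_fun_mul hφ hψ, add_apply, smul_apply, smul_eq_mul]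
  ring

theorem pd_inv (i : Fin n) (hψ : DifferentiableAt ℝ ψ x) (hψ₀ : ψ x ≠ 0) :
    pd i (fun y => (ψ y)⁻¹) x = -pd i ψ x / ψ x ^ 2 := by
  have h : HasFDerivAt (fun y => (ψ y)⁻¹) _ x := (hasFDerivAt_inv hψ₀).comp x hψ.hasFDerivAt
  simp [pd, h.fderiv, div_eq_mul_inv, mul_comm]

theorem pd_div (i : Fin n) (hφ : DifferentiableAt ℝ φ x) (hψ : DifferentiableAt ℝ ψ x)
    (hψ₀ : ψ x ≠ 0) :
    pd i (fun y => φ y / ψ y) x = (pd i φ x - φ x / ψ x * pd i ψ x) / ψ x := by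
  simp only [div_eq_mul_inv]
  rw [pd_mul i hφ (hψ.fun_inv hψ₀), pd_inv i hψ hψ₀]
  field_simp
  ring

theorem fderiv_apply_eq_sum_pd (φ : (Fin n → ℝ) → ℝ) (w : Fin n → ℝ) :
    fderiv ℝ φ x w = ∑ i, w i * pd i φ x := by
  conv_lhs => rw [← Finset.univ_sum_single w]
  simp only [map_sum, pd]
  congr! 1 with i
  rw [← smul_eq_mul, ← map_smul, ← Pi.single_smul', smul_eq_mul, mul_one]

theorem lieBr_apply_eq_sum {X Y : (Fin n → ℝ) → (Fin n → ℝ)}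
    (hX : DifferentiableAt ℝ X x) (hY : DifferentiableAt ℝ Y x) (i : Fin n) :
    lieBr X Y x i = ∑ j, (X x j * pd j (fun y => Y y i) x - Y x j * pd j (fun y => X y i) x) := by
  have hcomp {Z : (Fin n → ℝ) → (Fin n → ℝ)} (hZ : DifferentiableAt ℝ Z x) (v : Fin n → ℝ) :
      fderiv ℝ Z x v i = fderiv ℝ (fun y => Z y i) x v := by
    rw [fderiv_apply hZ]; rfl
  rw [lieBr, Pi.sub_apply, hcomp hY, hcomp hX, fderiv_apply_eq_sum_pd, fderiv_apply_eq_sum_pd,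
    ← Finset.sum_sub_distrib]

theorem pd_pd_comm (h : ContDiffAt ℝ 2 φ x) (i j : Fin n) :
    pd i (pd j φ) x = pd j (pd i φ) x := by
  have hsymm := h.isSymmSndFDerivAt (by simp)
  have hd : DifferentiableAt ℝ (fderiv ℝ φ) x :=
    (h.fderiv_right (m := 1) (by norm_num)).differentiableAt (by simp)
  have key (a b : Fin n) :
      pd a (pd b φ) x = fderiv ℝ (fderiv ℝ φ) x (Pi.single a 1) (Pi.single b 1) := by
    unfold pd
    rw [fderiv_clm_apply hd (differentiableAt_const _)]
    simp
  rw [key, key, hsymm]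

theorem ContDiffOn.pd {U : Set (Fin n → ℝ)} {k m : WithTop ℕ∞} (hU : IsOpen U)
    (h : ContDiffOn ℝ k φ U) (hmk : m + 1 ≤ k) (i : Fin n) : ContDiffOn ℝ m (pd i φ) U :=
  (h.fderiv_of_isOpen hU hmk).clm_apply contDiffOn_const

end PartialDerivatives

section ThirdPartials

variable {n : ℕ} {U : Set (Fin n → ℝ)} {u : (Fin n → ℝ) → ℝ} {x : Fin n → ℝ}

theorem differentiableAt_pd2 (hU : IsOpen U) (hu : ContDiffOn ℝ 3 u U) (hx : x ∈ U)
    (i j : Fin n) : DifferentiableAt ℝ (pd2 i j u) x :=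
  (((hu.pd hU (m := 2) (by norm_num) j).pd hU (m := 1) (by norm_num) i).contDiffAt
    (hU.mem_nhds hx)).differentiableAt one_ne_zero

theorem pd2_comm (hU : IsOpen U) (hu : ContDiffOn ℝ 3 u U) (hx : x ∈ U) (j k : Fin n) :
    pd2 j k u x = pd2 k j u x :=
  pd_pd_comm ((hu.contDiffAt (hU.mem_nhds hx)).of_le (by norm_num)) j k

theorem pd_pd2_left_comm (hU : IsOpen U) (hu : ContDiffOn ℝ 3 u U) (hx : x ∈ U) (i j k : Fin n) :
    pd i (pd2 j k u) x = pd j (pd2 i k u) x :=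
  pd_pd_comm ((hu.pd hU (m := 2) (by norm_num) k).contDiffAt (hU.mem_nhds hx)) i j

theorem pd_pd2_comm (hU : IsOpen U) (hu : ContDiffOn ℝ 3 u U) (hx : x ∈ U) (i j k : Fin n) :
    pd i (pd2 j k u) x = pd i (pd2 k j u) x :=
  pd_congr_of_eventuallyEq i
    (Filter.eventuallyEq_of_mem (hU.mem_nhds hx) fun _ hy => pd2_comm hU hu hy j k)

end ThirdPartials

section LaxPair

def heavenlyOp (u : (Fin 4 → ℝ) → ℝ) (x : Fin 4 → ℝ) : ℝ :=
  pd2 0 2 u x + pd2 1 3 u x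
    + (x 0 * x 2 + x 1 * x 3) * (pd2 0 0 u x * pd2 1 1 u x - (pd2 0 1 u x) ^ 2)

-- Components in the basis `∂₁, …, ∂₄`; `Fin 4` is 0-based, so `y 0` is `x₁`.
def laxX (u : (Fin 4 → ℝ) → ℝ) (lam : ℝ) (y : Fin 4 → ℝ) : Fin 4 → ℝ :=
  ![-((y 0 * y 2 + y 1 * y 3) * pd2 0 1 u y) + (y 0 - lam * y 1) / (y 3 + lam * y 2),
    (y 0 * y 2 + y 1 * y 3) * pd2 0 0 u y, 0, 1]

def laxY (u : (Fin 4 → ℝ) → ℝ) (lam : ℝ) (y : Fin 4 → ℝ) : Fin 4 → ℝ :=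
  ![(y 0 * y 2 + y 1 * y 3) * pd2 1 1 u y,
    -((y 0 * y 2 + y 1 * y 3) * pd2 0 1 u y) - (y 0 - lam * y 1) / (y 3 + lam * y 2), 1, 0]

variable {U : Set (Fin 4 → ℝ)} {u : (Fin 4 → ℝ) → ℝ} {lam : ℝ} {x : Fin 4 → ℝ}

theorem differentiableAt_laxX (hU : IsOpen U) (hu : ContDiffOn ℝ 3 u U) (hx : x ∈ U)
    (hd : x 3 + lam * x 2 ≠ 0) : DifferentiableAt ℝ (laxX u lam) x := by
  have hpd2 := differentiableAt_pd2 hU hu hx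
  refine differentiableAt_pi.2 fun i => ?_
  fin_cases i <;>
    simp only [laxX, Fin.zero_eta, Fin.mk_one, Fin.reduceFinMk, Matrix.cons_val_zero,
      Matrix.cons_val_one, Matrix.cons_val] <;>
    fun_prop (disch := assumption)

theorem differentiableAt_laxY (hU : IsOpen U) (hu : ContDiffOn ℝ 3 u U) (hx : x ∈ U)
    (hd : x 3 + lam * x 2 ≠ 0) : DifferentiableAt ℝ (laxY u lam) x := by
  have hpd2 := differentiableAt_pd2 hU hu hx
  refine differentiableAt_pi.2 fun i => ?_
  fin_cases i <;>
    simp only [laxY, Fin.zero_eta, Fin.mk_one, Fin.reduceFinMk, Matrix.cons_val_zero,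
      Matrix.cons_val_one, Matrix.cons_val] <;>
    fun_prop (disch := assumption)

theorem lieBr_laxX_laxY_apply_zero (hU : IsOpen U) (hu : ContDiffOn ℝ 3 u U) (hx : x ∈ U)
    (hd : x 3 + lam * x 2 ≠ 0) :
    lieBr (laxX u lam) (laxY u lam) x 0 = (x 0 * x 2 + x 1 * x 3) * pd 1 (heavenlyOp u) x := by
  have hpd2 := differentiableAt_pd2 hU hu hx
  rw [lieBr_apply_eq_sum (differentiableAt_laxX hU hu hx hd) (differentiableAt_laxY hU hu hx hd)]
  unfold heavenlyOp
  simp only [laxX, laxY, Fin.sum_univ_four, Matrix.cons_val_zero, Matrix.cons_val_one,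
    Matrix.cons_val]
  simp (disch := first | assumption | decide | fun_prop (disch := assumption)) only [pd_add,
    pd_sub, pd_mul, pd_div, pd_neg, pd_const, pd_apply, sq, Pi.single_eq_same, Pi.single_eq_of_ne]
  -- rewrite the third derivatives into the form in which they occur in `∂₂E`
  rw [pd_pd2_left_comm hU hu hx 0 1 1, pd_pd2_left_comm hU hu hx 3 1 1,
    pd_pd2_comm hU hu hx 1 3 1, pd_pd2_comm hU hu hx 0 0 1, pd_pd2_left_comm hU hu hx 0 1 0,
    pd_pd2_comm hU hu hx 2 0 1, pd_pd2_left_comm hU hu hx 2 1 0, pd_pd2_comm hU hu hx 1 2 0]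
  -- the terms in `(x₁ - λx₂)/(x₄ + λx₃)` cancel only after clearing its denominator
  linear_combination -(x 0 * pd2 0 1 u x + x 1 * pd2 1 1 u x) * mul_inv_cancel₀ hd

theorem lieBr_laxX_laxY_apply_one (hU : IsOpen U) (hu : ContDiffOn ℝ 3 u U) (hx : x ∈ U)
    (hd : x 3 + lam * x 2 ≠ 0) :
    lieBr (laxX u lam) (laxY u lam) x 1 = -(x 0 * x 2 + x 1 * x 3) * pd 0 (heavenlyOp u) x := by
  have hpd2 := differentiableAt_pd2 hU hu hx
  rw [lieBr_apply_eq_sum (differentiableAt_laxX hU hu hx hd) (differentiableAt_laxY hU hu hx hd)]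
  unfold heavenlyOp
  simp only [laxX, laxY, Fin.sum_univ_four, Matrix.cons_val_zero, Matrix.cons_val_one,
    Matrix.cons_val]
  simp (disch := first | assumption | decide | fun_prop (disch := assumption)) only [pd_add,
    pd_sub, pd_mul, pd_div, pd_neg, pd_const, pd_apply, sq, Pi.single_eq_same, Pi.single_eq_of_ne]
  rw [pd_pd2_left_comm hU hu hx 1 0 0, pd_pd2_comm hU hu hx 0 1 0,
    pd_pd2_left_comm hU hu hx 3 0 1, pd_pd2_comm hU hu hx 0 3 1,
    pd_pd2_left_comm hU hu hx 2 0 0, pd_pd2_comm hU hu hx 0 2 0, pd_pd2_left_comm hU hu hx 1 0 1]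
  linear_combination (x 0 * pd2 0 0 u x + x 1 * pd2 0 1 u x) * mul_inv_cancel₀ hd

theorem lieBr_laxX_laxY_eq_zero (hU : IsOpen U) (hu : ContDiffOn ℝ 3 u U)
    (hsol : ∀ y ∈ U, heavenlyOp u y = 0) (hx : x ∈ U) (hd : x 3 + lam * x 2 ≠ 0) :
    lieBr (laxX u lam) (laxY u lam) x = 0 := by
  have hE (j : Fin 4) := pd_eq_zero_of_eqOn_zero hU hsol hx j
  ext i
  fin_cases i
  · simp [lieBr_laxX_laxY_apply_zero hU hu hx hd, hE]
  · simp [lieBr_laxX_laxY_apply_one hU hu hx hd, hE]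
  all_goals
    simp [lieBr_apply_eq_sum (differentiableAt_laxX hU hu hx hd) (differentiableAt_laxY hU hu hx hd),
      laxX, laxY, pd_const]

end LaxPair

/-- Lax pair (Frobenius integrability) for the deformed second heavenly
equation with `f = x₁x₃ + x₂x₄`. -/
theorem statement9 (U : Set (Fin 4 → ℝ)) (hU : IsOpen U)
    (u : (Fin 4 → ℝ) → ℝ) (hu : ContDiffOn ℝ ∞ u U)
    (hsol : ∀ x ∈ U,
      pd2 0 2 u x + pd2 1 3 u x
        + (x 0 * x 2 + x 1 * x 3) * (pd2 0 0 u x * pd2 1 1 u x - (pd2 0 1 u x) ^ 2) = 0)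
    (lam : ℝ) (hlam : ∀ x ∈ U, x 3 + lam * x 2 ≠ 0)
    (X Y : (Fin 4 → ℝ) → (Fin 4 → ℝ))
    (hX : X = fun x => (Pi.single 3 1 : Fin 4 → ℝ)
        + ((x 0 * x 2 + x 1 * x 3) * pd2 0 0 u x) • (Pi.single 1 1 : Fin 4 → ℝ)
        - ((x 0 * x 2 + x 1 * x 3) * pd2 0 1 u x) • (Pi.single 0 1 : Fin 4 → ℝ)
        + ((x 0 - lam * x 1) / (x 3 + lam * x 2)) • (Pi.single 0 1 : Fin 4 → ℝ))
    (hY : Y = fun x => (Pi.single 2 1 : Fin 4 → ℝ)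
        + ((x 0 * x 2 + x 1 * x 3) * pd2 1 1 u x) • (Pi.single 0 1 : Fin 4 → ℝ)
        - ((x 0 * x 2 + x 1 * x 3) * pd2 0 1 u x) • (Pi.single 1 1 : Fin 4 → ℝ)
        - ((x 0 - lam * x 1) / (x 3 + lam * x 2)) • (Pi.single 1 1 : Fin 4 → ℝ)) :
    ∀ x ∈ U, lieBr X Y x ∈ Submodule.span ℝ {X x, Y x} := by
  have hX' : X = laxX u lam := by
    subst hX; ext y i; fin_cases i <;> simp [laxX]
  have hY' : Y = laxY u lam := by
    subst hY; ext y i; fin_cases i <;> simp [laxY]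
  subst hX' hY'
  intro x hx
  rw [lieBr_laxX_laxY_eq_zero hU (hu.of_le ENat.LEInfty.out) hsol hx (hlam x hx)]
  exact zero_mem _
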